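/- arXiv:1706.01971 — 11 statements merged into one kernel-verified Lean document; each statement's English description precedes it below -/
import Mathlib

section
/- For all real numbers a, b ≥ 0 and all z > a + b - 1, the inequality Γ(z+1)·Γ(z-a-b+1) ≥ Γ(z-a+1)·Γ(z-b+1) holds. -/
/-!
`log ∘ Γ` is convex on `(0, ∞)`. With `p = z - a - b + 1` and `q = z + 1`, the points
`z - a + 1` and `z - b + 1` are mirror-image convex combinations `t p + (1 - t) q` and
`(1 - t) p + t q` of `p` and `q`, so adding the two convexity inequalities gives
`log Γ (z - a + 1) + log Γ (z - b + 1) ≤ log Γ p + log Γ q`.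
-/

theorem ConvexOn.map_add_map_le_of_add_eq {𝕜 β : Type*} [Field 𝕜] [LinearOrder 𝕜]
    [IsStrictOrderedRing 𝕜] [AddCommGroup β] [PartialOrder β] [IsOrderedAddMonoid β]
    [Module 𝕜 β] {s : Set 𝕜} {f : 𝕜 → β} (hf : ConvexOn 𝕜 s f) {p q x y : 𝕜}
    (hp : p ∈ s) (hq : q ∈ s) (hpx : p ≤ x) (hpy : p ≤ y) (hsum : x + y = p + q) :
    f x + f y ≤ f p + f q := by
  rcases hpx.eq_or_lt with rfl | hpx
  · obtain rfl : y = q := by linear_combination hsum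
    exact le_rfl
  have hpq : 0 < q - p := by linarith
  set t := (q - x) / (q - p)
  have ht₀ : 0 ≤ t := div_nonneg (by linarith) hpq.le
  have ht₁ : 0 ≤ 1 - t := by
    rw [sub_nonneg, div_le_one hpq]; linarith
  have hx : t • p + (1 - t) • q = x := by
    simp only [smul_eq_mul, t]; field_simp; ring
  have hy : (1 - t) • p + t • q = y := by
    simp only [smul_eq_mul, t]; rw [eq_sub_of_add_eq' hsum]; field_simp; ring
  calc f x + f y ≤ (t • f p + (1 - t) • f q) + ((1 - t) • f p + t • f q) := by
        rw [← hx, ← hy]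
        exact add_le_add (hf.2 hp hq ht₀ ht₁ (by ring)) (hf.2 hp hq ht₁ ht₀ (by ring))
    _ = f p + f q := by
        rw [add_add_add_comm, ← add_smul, ← add_smul, add_sub_cancel, sub_add_cancel, one_smul,
          one_smul]

namespace Real

theorem Gamma_mul_Gamma_le_of_add_eq {p q x y : ℝ} (hp : 0 < p) (hpx : p ≤ x) (hpy : p ≤ y)
    (hsum : x + y = p + q) : Gamma x * Gamma y ≤ Gamma p * Gamma q := by
  have hΓ : ∀ {u : ℝ}, p ≤ u → 0 < Gamma u := fun hu => Gamma_pos_of_pos (hp.trans_le hu)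
  have hpq : p ≤ q := by linarith
  rw [← log_le_log_iff (mul_pos (hΓ hpx) (hΓ hpy)) (mul_pos (hΓ le_rfl) (hΓ hpq)),
    log_mul (hΓ hpx).ne' (hΓ hpy).ne', log_mul (hΓ le_rfl).ne' (hΓ hpq).ne']
  exact convexOn_log_Gamma.map_add_map_le_of_add_eq hp (hp.trans_le hpq) hpx hpy hsum

end Real

theorem stmt_0 (a b z : ℝ) (ha : 0 ≤ a) (hb : 0 ≤ b) (hz : z > a + b - 1) :
    Real.Gamma (z + 1) * Real.Gamma (z - a - b + 1) ≥
      Real.Gamma (z - a + 1) * Real.Gamma (z - b + 1) := by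
  rw [ge_iff_le, mul_comm (Real.Gamma (z + 1))]
  exact Real.Gamma_mul_Gamma_le_of_add_eq (by linarith) (by linarith) (by linarith) (by ring)
end

section
/- For all real a, b ≥ 0, the function f(z) = Γ(z+1)·Γ(z-a-b+1) / (Γ(z-a+1)·Γ(z-b+1)) is decreasing (antitone) on the interval (a+b-1, ∞). -/
/-!
Since `(z + 1) + (z - a - b + 1) = (z - a + 1) + (z - b + 1)`, the powers `n ^ s` cancel in
Euler's limit formula `Γ(s) = lim n ^ s n! / ∏_{j ≤ n} (s + j)`, which turns the quotient of
Gamma values into the infinite product `∏_j (w_j - a)(w_j - b) / (w_j (w_j - a - b))` with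
`w_j = z + 1 + j`. Each factor equals `1 + a b / (w_j (w_j - a - b))`, which is decreasing in
`z` because `a b ≥ 0`; so are the partial products, and hence their limit.
-/

open Filter Finset Topology

namespace Real

lemma GammaSeq_mul_div_GammaSeq_mul {s t u v : ℝ} (hs : 0 < s) (ht : 0 < t) (hu : 0 < u)
    (hv : 0 < v) (hstuv : s + t = u + v) {n : ℕ} (hn : 0 < n) :
    GammaSeq s n * GammaSeq t n / (GammaSeq u n * GammaSeq v n) =
      ∏ j ∈ range (n + 1), (u + j) * (v + j) / ((s + j) * (t + j)) := by
  have hn' : (0 : ℝ) < n := Nat.cast_pos.mpr hn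
  have hpow : (n : ℝ) ^ s * (n : ℝ) ^ t = (n : ℝ) ^ u * (n : ℝ) ^ v := by
    rw [← rpow_add hn', ← rpow_add hn', hstuv]
  have hprod {r : ℝ} (hr : 0 < r) : ∏ j ∈ range (n + 1), (r + j) ≠ 0 :=
    (prod_pos fun j _ => by positivity).ne'
  have := hprod hs
  have := hprod ht
  have := hprod hu
  have := hprod hv
  have := rpow_pos_of_pos hn' u
  have := rpow_pos_of_pos hn' v
  simp only [GammaSeq, prod_div_distrib, prod_mul_distrib]
  field_simp
  linear_combination hpow

lemma tendsto_prod_div_mul_Gamma {s t u v : ℝ} (hs : 0 < s) (ht : 0 < t) (hu : 0 < u)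
    (hv : 0 < v) (hstuv : s + t = u + v) :
    Tendsto (fun n : ℕ => ∏ j ∈ range (n + 1), (u + j) * (v + j) / ((s + j) * (t + j)))
      atTop (𝓝 (Gamma s * Gamma t / (Gamma u * Gamma v))) := by
  have hne : Gamma u * Gamma v ≠ 0 := (mul_pos (Gamma_pos_of_pos hu) (Gamma_pos_of_pos hv)).ne'
  refine Tendsto.congr' ?_ <| ((GammaSeq_tendsto_Gamma s).mul (GammaSeq_tendsto_Gamma t)).div
    ((GammaSeq_tendsto_Gamma u).mul (GammaSeq_tendsto_Gamma v)) hne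
  filter_upwards [eventually_gt_atTop 0] with n hn
  exact GammaSeq_mul_div_GammaSeq_mul hs ht hu hv hstuv hn

end Real

lemma antitoneOn_sub_mul_sub_div_mul_sub {a b : ℝ} (ha : 0 ≤ a) (hb : 0 ≤ b) :
    AntitoneOn (fun w : ℝ => (w - a) * (w - b) / (w * (w - a - b))) (Set.Ioi (a + b)) := by
  intro x hx y hy hxy
  rw [Set.mem_Ioi] at hx hy
  have hx' : 0 < x * (x - a - b) := mul_pos (by linarith) (by linarith)
  have hy' : 0 < y * (y - a - b) := mul_pos (by linarith) (by linarith)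
  have hsplit {w : ℝ} (hw : 0 < w * (w - a - b)) :
      (w - a) * (w - b) / (w * (w - a - b)) = 1 + a * b / (w * (w - a - b)) := by
    rw [one_add_div hw.ne']
    ring_nf
  simp only [hsplit hx', hsplit hy', add_le_add_iff_left]
  gcongr <;> linarith

theorem stmt_1 (a b : ℝ) (ha : 0 ≤ a) (hb : 0 ≤ b) :
    AntitoneOn (fun z : ℝ =>
      Real.Gamma (z + 1) * Real.Gamma (z - a - b + 1) /
        (Real.Gamma (z - a + 1) * Real.Gamma (z - b + 1)))
      (Set.Ioi (a + b - 1)) := by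
  let factor : ℝ → ℝ := fun w => (w - a) * (w - b) / (w * (w - a - b))
  have hlim : ∀ z ∈ Set.Ioi (a + b - 1), Tendsto (fun n : ℕ => ∏ j ∈ range (n + 1),
      factor (z + 1 + j)) atTop (𝓝 (Real.Gamma (z + 1) * Real.Gamma (z - a - b + 1) /
        (Real.Gamma (z - a + 1) * Real.Gamma (z - b + 1)))) := by
    intro z hz
    rw [Set.mem_Ioi] at hz
    convert Real.tendsto_prod_div_mul_Gamma (by linarith) (by linarith) (by linarith)
      (by linarith) (by ring : (z + 1) + (z - a - b + 1) = (z - a + 1) + (z - b + 1)) using 3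
    simp only [factor]
    ring_nf
  intro x hx y hy hxy
  refine le_of_tendsto_of_tendsto' (hlim y hy) (hlim x hx) fun n => ?_
  rw [Set.mem_Ioi] at hx hy
  refine prod_le_prod (fun j _ => ?_) (fun j _ => ?_) <;> have hj : (0 : ℝ) ≤ j := j.cast_nonneg
  · exact div_nonneg (mul_nonneg (by linarith) (by linarith))
      (mul_nonneg (by linarith) (by linarith))
  · exact antitoneOn_sub_mul_sub_div_mul_sub ha hb (Set.mem_Ioi.mpr (by linarith))
      (Set.mem_Ioi.mpr (by linarith)) (by linarith)
end

section
/- Let a, b ≥ 0 and let ψ(z) denote the digamma function. Then for all z > a+b-1, ψ(z+1) + ψ(z-a-b+1) - ψ(z-a+1) - ψ(z-b+1) ≤ 0. -/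
/-!
For `b ≥ 0` the function `t ↦ log Γ(t) - log Γ(t + b)` is convex on `(0, ∞)`: by the Euler–Gauss
formula it is the limit of `∑_{m ≤ n} (log (t + m + b) - log (t + m)) - b log n`, a sum of convex
functions. Its derivative `ψ(t) - ψ(t + b)` is therefore nondecreasing, and comparing the points
`z - a - b + 1 ≤ z - b + 1` gives the inequality.
-/

/-- The digamma function ψ(z) = Γ'(z)/Γ(z). -/
noncomputable def digamma (z : ℝ) : ℝ := deriv Real.Gamma z / Real.Gamma z

open Real Set Filter Topology

theorem ConvexOn.of_tendsto {ι E : Type*} [AddCommMonoid E] [SMul ℝ E] {l : Filter ι} [l.NeBot]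
    {s : Set E} {F : ι → E → ℝ} {f : E → ℝ} (hF : ∀ᶠ i in l, ConvexOn ℝ s (F i))
    (hlim : ∀ x ∈ s, Tendsto (fun i => F i x) l (𝓝 (f x))) : ConvexOn ℝ s f := by
  obtain ⟨i, hi⟩ := hF.exists
  refine ⟨hi.1, fun x hx y hy a b ha hb hab => ?_⟩
  exact le_of_tendsto_of_tendsto (hlim _ (hi.1 hx hy ha hb hab))
    (((hlim x hx).const_mul a).add ((hlim y hy).const_mul b))
    (hF.mono fun i hi => hi.2 hx hy ha hb hab)

theorem ConvexOn.finset_sum {ι E : Type*} [AddCommMonoid E] [SMul ℝ E] {s : Set E}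
    {t : Finset ι} {f : ι → E → ℝ} (hs : Convex ℝ s) (hf : ∀ i ∈ t, ConvexOn ℝ s (f i)) :
    ConvexOn ℝ s fun x => ∑ i ∈ t, f i x := by
  classical
  induction t using Finset.induction_on with
  | empty => simpa only [Finset.sum_empty] using convexOn_const 0 hs
  | insert i t hi ih =>
    simp only [Finset.sum_insert hi]
    exact (hf i (t.mem_insert_self i)).add (ih fun j hj => hf j (Finset.mem_insert_of_mem hj))

theorem convexOn_log_add_sub_log_add {b c : ℝ} (hb : 0 ≤ b) :
    ConvexOn ℝ (Ioi (-c)) fun t => log (t + c + b) - log (t + c) := by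
  have hpos : ∀ t ∈ Ioi (-c), 0 < t + c ∧ 0 < t + c + b := fun t ht => by
    constructor <;> linarith [mem_Ioi.mp ht]
  have hf' : ∀ t ∈ Ioi (-c), HasDerivAt (fun t => log (t + c + b) - log (t + c))
      ((t + c + b)⁻¹ - (t + c)⁻¹) t := fun t ht => by
    obtain ⟨h₁, h₂⟩ := hpos t ht
    have hlog₂ : HasDerivAt (fun t => log (t + c + b)) (t + c + b)⁻¹ t := by
      simpa using (((hasDerivAt_id t).add_const c).add_const b).log h₂.ne'
    have hlog₁ : HasDerivAt (fun t => log (t + c)) (t + c)⁻¹ t := by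
      simpa using ((hasDerivAt_id t).add_const c).log h₁.ne'
    exact hlog₂.sub hlog₁
  have hf'' : ∀ t ∈ Ioi (-c), HasDerivAt (fun t => (t + c + b)⁻¹ - (t + c)⁻¹)
      (-1 / (t + c + b) ^ 2 - -1 / (t + c) ^ 2) t := fun t ht => by
    obtain ⟨h₁, h₂⟩ := hpos t ht
    exact ((((hasDerivAt_id t).add_const c).add_const b).inv h₂.ne').sub
      (((hasDerivAt_id t).add_const c).inv h₁.ne')
  rw [← interior_Ioi] at hf' hf''
  refine convexOn_of_hasDerivWithinAt2_nonneg (convex_Ioi _)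
    (fun t ht => (hf' t (by rwa [interior_Ioi])).continuousAt.continuousWithinAt)
    (fun t ht => (hf' t ht).hasDerivWithinAt) (fun t ht => (hf'' t ht).hasDerivWithinAt)
    fun t ht => ?_
  obtain ⟨h₁, h₂⟩ := hpos t (by rwa [interior_Ioi] at ht)
  have : 1 / (t + c + b) ^ 2 ≤ 1 / (t + c) ^ 2 :=
    one_div_le_one_div_of_le (by positivity) (pow_le_pow_left₀ h₁.le (by linarith) 2)
  simp only [neg_div]
  linarith

namespace Real.BohrMollerup

theorem logGammaSeq_sub_logGammaSeq_add (t b : ℝ) (n : ℕ) :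
    logGammaSeq t n - logGammaSeq (t + b) n =
      ∑ m ∈ Finset.range (n + 1), (log (t + m + b) - log (t + m)) - b * log n := by
  simp only [logGammaSeq, Finset.sum_sub_distrib, add_right_comm t b]
  ring

theorem convexOn_logGammaSeq_sub_logGammaSeq_add {b : ℝ} (hb : 0 ≤ b) (n : ℕ) :
    ConvexOn ℝ (Ioi 0) fun t => logGammaSeq t n - logGammaSeq (t + b) n := by
  simp only [logGammaSeq_sub_logGammaSeq_add, sub_eq_add_neg _ (b * log n)]
  refine ConvexOn.add_const ?_ _
  exact .finset_sum (convex_Ioi 0) fun (m : ℕ) _ =>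
    (convexOn_log_add_sub_log_add (c := m) hb).subset
      (Ioi_subset_Ioi (by simp)) (convex_Ioi 0)

end Real.BohrMollerup

open Real.BohrMollerup in
theorem Real.convexOn_log_Gamma_sub_log_Gamma_add {b : ℝ} (hb : 0 ≤ b) :
    ConvexOn ℝ (Ioi 0) fun t => log (Gamma t) - log (Gamma (t + b)) :=
  .of_tendsto (.of_forall (convexOn_logGammaSeq_sub_logGammaSeq_add hb)) fun _ ht =>
    (tendsto_log_gamma ht).sub (tendsto_log_gamma (add_pos_of_pos_of_nonneg ht hb))

theorem hasDerivAt_log_Gamma {t : ℝ} (ht : 0 < t) :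
    HasDerivAt (fun t => log (Gamma t)) (digamma t) t :=
  (differentiableAt_Gamma fun m => by linarith [m.cast_nonneg (α := ℝ)]).hasDerivAt.log
    (Gamma_pos_of_pos ht).ne'

theorem monotoneOn_digamma_sub_digamma_add {b : ℝ} (hb : 0 ≤ b) :
    MonotoneOn (fun t => digamma t - digamma (t + b)) (Ioi 0) := by
  have hderiv : ∀ t ∈ Ioi (0 : ℝ), HasDerivAt (fun t => log (Gamma t) - log (Gamma (t + b)))
      (digamma t - digamma (t + b)) t := fun t ht =>
    (hasDerivAt_log_Gamma ht).sub
      ((hasDerivAt_log_Gamma (add_pos_of_pos_of_nonneg ht hb)).comp_add_const t b)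
  exact ((convexOn_log_Gamma_sub_log_Gamma_add hb).monotoneOn_deriv
    fun t ht => (hderiv t ht).differentiableAt).congr fun t ht => (hderiv t ht).deriv

theorem stmt_2 (a b z : ℝ) (ha : 0 ≤ a) (hb : 0 ≤ b) (hz : z > a + b - 1) :
    digamma (z + 1) + digamma (z - a - b + 1) - digamma (z - a + 1) - digamma (z - b + 1) ≤ 0 := by
  have hx : z - a - b + 1 ∈ Ioi (0 : ℝ) := by rw [mem_Ioi]; linarith
  have hy : z - b + 1 ∈ Ioi (0 : ℝ) := by rw [mem_Ioi]; linarith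
  have key := monotoneOn_digamma_sub_digamma_add hb hx hy (by linarith)
  simp only [show z - a - b + 1 + b = z - a + 1 by ring, show z - b + 1 + b = z + 1 by ring] at key
  linarith
end

section
/- Let n ≥ 1, let a₁, …, aₙ ≥ 0 be real numbers with sum A = a₁ + ⋯ + aₙ. Then for all z > A - 1, Γ(z+1)^{n-1} · Γ(z - A + 1) ≥ ∏_{i=1}^{n} Γ(z - aᵢ + 1). -/
/-!
`log ∘ Γ` is convex on `(0, ∞)`, and a convex function has increasing increments:
`g (y - b) + g (y - c) ≤ g y + g (y - b - c)` for `b, c ≥ 0`. Exponentiating, moving the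
points `z + 1 - aᵢ` one at a time towards `z + 1 - A` and `z + 1` never decreases the product.
-/

open Real Set Finset

theorem ConvexOn.map_sub_add_map_sub_le {s : Set ℝ} {g : ℝ → ℝ} (hg : ConvexOn ℝ s g)
    {y b c : ℝ} (hy : y ∈ s) (hybc : y - b - c ∈ s) (hb : 0 ≤ b) (hc : 0 ≤ c) :
    g (y - b) + g (y - c) ≤ g y + g (y - b - c) := by
  rcases (add_nonneg hb hc).eq_or_lt with hbc | hbc
  · obtain rfl : b = 0 := by linarith
    obtain rfl : c = 0 := by linarith
    simp
  -- `y - b` and `y - c` are the convex combinations of `y - b - c` and `y` with weights `t, 1 - t`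
  -- and `1 - t, t`, where `t = b / (b + c)`.
  set t := b / (b + c)
  have ht₀ : 0 ≤ t := div_nonneg hb hbc.le
  have ht₁ : 0 ≤ 1 - t := by rw [sub_nonneg, div_le_one hbc]; linarith
  have hb' : t • (y - b - c) + (1 - t) • y = y - b := by
    simp only [smul_eq_mul, t]; field_simp; ring
  have hc' : (1 - t) • (y - b - c) + t • y = y - c := by
    simp only [smul_eq_mul, t]; field_simp; ring
  have h₁ := hg.2 hybc hy ht₀ ht₁ (by ring)
  have h₂ := hg.2 hybc hy ht₁ ht₀ (by ring)
  rw [hb'] at h₁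
  rw [hc'] at h₂
  simp only [smul_eq_mul] at h₁ h₂
  linarith

section LogConvex

variable {s : Set ℝ} {f : ℝ → ℝ}

theorem mul_map_sub_le_of_convexOn_log (hf : ConvexOn ℝ s (log ∘ f))
    (hpos : ∀ x ∈ s, 0 < f x) {y b c : ℝ} (hy : y ∈ s) (hybc : y - b - c ∈ s)
    (hb : 0 ≤ b) (hc : 0 ≤ c) :
    f (y - b) * f (y - c) ≤ f y * f (y - b - c) := by
  have mem {x : ℝ} (h₁ : y - b - c ≤ x) (h₂ : x ≤ y) : x ∈ s :=
    hf.1.ordConnected.out hybc hy ⟨h₁, h₂⟩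
  have hyb := hpos _ (mem (by linarith) (by linarith) : y - b ∈ s)
  have hyc := hpos _ (mem (by linarith) (by linarith) : y - c ∈ s)
  rw [← log_le_log_iff (by positivity) (mul_pos (hpos y hy) (hpos _ hybc)),
    log_mul hyb.ne' hyc.ne', log_mul (hpos y hy).ne' (hpos _ hybc).ne']
  exact hf.map_sub_add_map_sub_le hy hybc hb hc

-- The extra factor `f y` on the left lets the induction start at `t = ∅` without `#t - 1`.
theorem mul_prod_map_sub_le_of_convexOn_log {ι : Type*} (hf : ConvexOn ℝ s (log ∘ f))
    (hpos : ∀ x ∈ s, 0 < f x) (t : Finset ι) {a : ι → ℝ} (ha : ∀ i ∈ t, 0 ≤ a i)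
    {y : ℝ} (hy : y ∈ s) (hyt : y - ∑ i ∈ t, a i ∈ s) :
    f y * ∏ i ∈ t, f (y - a i) ≤ f y ^ #t * f (y - ∑ i ∈ t, a i) := by
  classical
  induction t using Finset.induction_on with
  | empty => simp
  | insert j t hj ih =>
    rw [sum_insert hj, add_comm, ← sub_sub] at hyt
    have ha' : ∀ i ∈ t, 0 ≤ a i := fun i hi => ha i (mem_insert_of_mem hi)
    have hsum : 0 ≤ ∑ i ∈ t, a i := sum_nonneg ha'
    have haj : 0 ≤ a j := ha j (mem_insert_self j t)
    have mem {x : ℝ} (h₁ : y - ∑ i ∈ t, a i - a j ≤ x) (h₂ : x ≤ y) : x ∈ s :=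
      hf.1.ordConnected.out hyt hy ⟨h₁, h₂⟩
    calc f y * ∏ i ∈ insert j t, f (y - a i)
        = (f y * ∏ i ∈ t, f (y - a i)) * f (y - a j) := by rw [prod_insert hj]; ring
      _ ≤ (f y ^ #t * f (y - ∑ i ∈ t, a i)) * f (y - a j) := by
          refine mul_le_mul_of_nonneg_right (ih ha' (mem ?_ ?_)) (hpos _ (mem ?_ ?_)).le <;>
            linarith
      _ = f y ^ #t * (f (y - ∑ i ∈ t, a i) * f (y - a j)) := by ring
      _ ≤ f y ^ #t * (f y * f (y - ∑ i ∈ t, a i - a j)) :=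
          mul_le_mul_of_nonneg_left (mul_map_sub_le_of_convexOn_log hf hpos hy hyt hsum haj)
            (pow_nonneg (hpos y hy).le _)
      _ = f y ^ #(insert j t) * f (y - ∑ i ∈ insert j t, a i) := by
          rw [card_insert_of_notMem hj, sum_insert hj, add_comm (a j), ← sub_sub]; ring

end LogConvex

theorem stmt_3 (n : ℕ) (hn : 1 ≤ n) (a : Fin n → ℝ) (ha : ∀ i, 0 ≤ a i)
    (z : ℝ) (hz : z > (∑ i, a i) - 1) :
    Real.Gamma (z + 1) ^ (n - 1) * Real.Gamma (z - (∑ i, a i) + 1) ≥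
      ∏ i, Real.Gamma (z - a i + 1) := by
  have hA : 0 ≤ ∑ i, a i := sum_nonneg fun i _ => ha i
  have hΓ : 0 < Gamma (z + 1) := Gamma_pos_of_pos (by linarith)
  have key := mul_prod_map_sub_le_of_convexOn_log convexOn_log_Gamma
    (fun x hx => Gamma_pos_of_pos hx) univ (fun i _ => ha i) (y := z + 1)
    (mem_Ioi.2 (by linarith)) (mem_Ioi.2 (by linarith))
  have hpow : Gamma (z + 1) ^ n = Gamma (z + 1) * Gamma (z + 1) ^ (n - 1) := by
    rw [← pow_succ', Nat.sub_add_cancel hn]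
  rw [card_univ, Fintype.card_fin, hpow, mul_assoc] at key
  simp only [sub_add_eq_add_sub]
  exact le_of_mul_le_mul_left key hΓ
end

section
/- For all real x, y > 0, Γ(x)·Γ(y) / Γ((x+y)/2)² ≥ (x+y)² / (4xy). -/
/-! Midpoint log-convexity of `Γ` at `x + 1` and `y + 1` gives
`((x + y) / 2)² Γ((x + y) / 2)² ≤ x y Γ(x) Γ(y)` via `Γ(z + 1) = z Γ(z)`. -/

open Real

theorem Real.Gamma_midpoint_sq_le_Gamma_mul_Gamma {s t : ℝ} (hs : 0 < s) (ht : 0 < t) :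
    Gamma ((s + t) / 2) ^ 2 ≤ Gamma s * Gamma t := by
  have h := Gamma_mul_add_mul_le_rpow_Gamma_mul_rpow_Gamma hs ht
    (by norm_num : (0 : ℝ) < 1 / 2) (by norm_num : (0 : ℝ) < 1 / 2) (by norm_num)
  rw [← sqrt_eq_rpow, ← sqrt_eq_rpow, ← sqrt_mul (Gamma_pos_of_pos hs).le,
    show 1 / 2 * s + 1 / 2 * t = (s + t) / 2 by ring] at h
  calc Gamma ((s + t) / 2) ^ 2 ≤ √(Gamma s * Gamma t) ^ 2 :=
        pow_le_pow_left₀ (Gamma_pos_of_pos (by positivity)).le h 2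
    _ = Gamma s * Gamma t := sq_sqrt (mul_pos (Gamma_pos_of_pos hs) (Gamma_pos_of_pos ht)).le

theorem stmt_8 (x y : ℝ) (hx : 0 < x) (hy : 0 < y) :
    Real.Gamma x * Real.Gamma y / Real.Gamma ((x + y) / 2) ^ 2 ≥
      (x + y) ^ 2 / (4 * x * y) := by
  have key := Gamma_midpoint_sq_le_Gamma_mul_Gamma (s := x + 1) (t := y + 1)
    (by linarith) (by linarith)
  rw [show (x + 1 + (y + 1)) / 2 = (x + y) / 2 + 1 by ring, Gamma_add_one (by positivity),
    Gamma_add_one hx.ne', Gamma_add_one hy.ne'] at key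
  rw [ge_iff_le, div_le_div_iff₀ (by positivity) (pow_pos (Gamma_pos_of_pos (by positivity)) 2)]
  linear_combination 4 * key
end

section
/- For 0 ≤ a < 1 and z ≥ 0, 1 ≤ Γ(z+a+1)·Γ(z-a+1) / Γ(z+1)² ≤ Γ(1-a)·Γ(1+a). -/
/-!
By Euler's limit formula, `Γ(s + a) Γ(s - a) / Γ(s)²` is the limit of the partial products
`∏_{j ≤ n} (s + j)² / ((s + j + a)(s + j - a))`. Each factor `x² / (x² - a²)` is at least `1` and
decreases in `x`, so for `s = z + 1 ≥ 1` the products lie between `1` and those at `s = 1`, whose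
limit is `Γ(1 + a) Γ(1 - a)`.
-/

open Filter Finset Topology

noncomputable def gammaRatioFactor (a x : ℝ) : ℝ := x ^ 2 / ((x + a) * (x - a))

lemma gammaRatioFactor_eq (a x : ℝ) : gammaRatioFactor a x = x ^ 2 / (x ^ 2 - a ^ 2) := by
  rw [gammaRatioFactor]
  ring_nf

lemma one_le_gammaRatioFactor {a x : ℝ} (h : a ^ 2 < x ^ 2) : 1 ≤ gammaRatioFactor a x := by
  rw [gammaRatioFactor_eq, one_le_div (by linarith)]
  nlinarith [sq_nonneg a]

lemma gammaRatioFactor_le_of_sq_le {a x y : ℝ} (h : a ^ 2 < x ^ 2) (hxy : x ^ 2 ≤ y ^ 2) :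
    gammaRatioFactor a y ≤ gammaRatioFactor a x := by
  rw [gammaRatioFactor_eq, gammaRatioFactor_eq, div_le_div_iff₀ (by linarith) (by linarith)]
  nlinarith [mul_le_mul_of_nonneg_left hxy (sq_nonneg a)]

lemma gammaSeq_ratio_eq_prod (a s : ℝ) {n : ℕ} (hn : n ≠ 0) :
    Real.GammaSeq (s + a) n * Real.GammaSeq (s - a) n / Real.GammaSeq s n ^ 2 =
      ∏ j ∈ range (n + 1), gammaRatioFactor a (s + j) := by
  have hn' : (0 : ℝ) < n := by positivity
  have hpow : (n : ℝ) ^ (s + a) * (n : ℝ) ^ (s - a) = ((n : ℝ) ^ s) ^ 2 := by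
    rw [← Real.rpow_add hn', sq, ← Real.rpow_add hn']
    ring_nf
  simp only [Real.GammaSeq, gammaRatioFactor, prod_div_distrib, prod_pow, prod_mul_distrib]
  rw [div_mul_div_comm, mul_mul_mul_comm, hpow, ← sq, div_pow, mul_pow,
    div_div_div_cancel_left' _ _ (by positivity)]
  simp only [add_right_comm s a, sub_add_eq_add_sub]

lemma tendsto_prod_gammaRatioFactor (a : ℝ) {s : ℝ} (hs : Real.Gamma s ≠ 0) :
    Tendsto (fun n : ℕ => ∏ j ∈ range (n + 1), gammaRatioFactor a (s + j)) atTop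
      (𝓝 (Real.Gamma (s + a) * Real.Gamma (s - a) / Real.Gamma s ^ 2)) := by
  have hlim := ((Real.GammaSeq_tendsto_Gamma (s + a)).mul
    (Real.GammaSeq_tendsto_Gamma (s - a))).div ((Real.GammaSeq_tendsto_Gamma s).pow 2)
    (pow_ne_zero 2 hs)
  refine hlim.congr' (eventually_atTop.2 ⟨1, fun n hn => ?_⟩)
  exact gammaSeq_ratio_eq_prod a s (Nat.one_le_iff_ne_zero.1 hn)

theorem stmt_12 (a z : ℝ) (ha0 : 0 ≤ a) (ha1 : a < 1) (hz : 0 ≤ z) :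
    1 ≤ Real.Gamma (z + a + 1) * Real.Gamma (z - a + 1) / Real.Gamma (z + 1) ^ 2 ∧
      Real.Gamma (z + a + 1) * Real.Gamma (z - a + 1) / Real.Gamma (z + 1) ^ 2 ≤
        Real.Gamma (1 - a) * Real.Gamma (1 + a) := by
  have hlim := tendsto_prod_gammaRatioFactor a
    (Real.Gamma_pos_of_pos (by linarith : 0 < z + 1)).ne'
  have hlim₁ := tendsto_prod_gammaRatioFactor a (s := 1) (by simp)
  rw [show z + 1 + a = z + a + 1 by ring, show z + 1 - a = z - a + 1 by ring] at hlim
  rw [Real.Gamma_one, one_pow, div_one, mul_comm] at hlim₁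
  have ha : ∀ j : ℕ, a ^ 2 < (1 + j) ^ 2 := fun j => by nlinarith [(j.cast_nonneg : (0 : ℝ) ≤ j)]
  have hsq : ∀ j : ℕ, (1 + j : ℝ) ^ 2 ≤ (z + 1 + j) ^ 2 := fun j => by
    gcongr
    linarith
  refine ⟨ge_of_tendsto' hlim fun n => one_le_prod fun j _ => ?_,
    le_of_tendsto_of_tendsto' hlim hlim₁ fun n => prod_le_prod (fun j _ => ?_) fun j _ => ?_⟩
  · exact one_le_gammaRatioFactor ((ha j).trans_le (hsq j))
  · exact zero_le_one.trans (one_le_gammaRatioFactor ((ha j).trans_le (hsq j)))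
  · exact gammaRatioFactor_le_of_sq_le (ha j) (hsq j)
end

section
/- For 0 < a < 1 and z > a, z²/(z² - a²) ≤ Γ(z+a)·Γ(z-a)/Γ(z)² ≤ π a z² / (sin(πa)·(z² - a²)). -/
/-! Euler's limit formula turns the Gamma ratio into the infinite product
`Γ(z+a)Γ(z-a)/Γ(z)² = ∏_{j ≥ 0} (z+j)² / ((z+j)² - a²)`, whose factors are all `≥ 1` and decrease
in `z`. Keeping only the factor `j = 0` gives the lower bound. For the upper bound, split off that
factor and compare each remaining factor at `z + 1 + j` with the one at `1 + j`; the product of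
the latter is `Γ(1+a)Γ(1-a) = πa / sin(πa)`. -/

open Real Filter Finset Topology

lemma one_le_sq_div_sq_sub_sq {a t : ℝ} (h : |a| < t) : 1 ≤ t ^ 2 / (t ^ 2 - a ^ 2) := by
  have hat : a ^ 2 < t ^ 2 := sq_lt_sq' (abs_lt.1 h).1 (abs_lt.1 h).2
  rw [one_le_div (sub_pos.2 hat)]
  linarith [sq_nonneg a]

lemma sq_div_sq_sub_sq_antitone {a s t : ℝ} (h : |a| < t) (hts : t ≤ s) :
    s ^ 2 / (s ^ 2 - a ^ 2) ≤ t ^ 2 / (t ^ 2 - a ^ 2) := by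
  have hat : a ^ 2 < t ^ 2 := sq_lt_sq' (abs_lt.1 h).1 (abs_lt.1 h).2
  have hts2 : t ^ 2 ≤ s ^ 2 := pow_le_pow_left₀ ((abs_nonneg a).trans h.le) hts 2
  rw [div_le_div_iff₀ (by linarith) (sub_pos.2 hat)]
  nlinarith [mul_le_mul_of_nonneg_left hts2 (sq_nonneg a)]

lemma Real.Gamma_one_add_mul_Gamma_one_sub {a : ℝ} (ha : a ≠ 0) :
    Gamma (1 + a) * Gamma (1 - a) = π * a / sin (π * a) := by
  rw [add_comm, Gamma_add_one ha, mul_assoc, Gamma_mul_Gamma_one_sub, mul_div_assoc,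
    mul_div_left_comm]

noncomputable def gammaRatioProd (a z : ℝ) (n : ℕ) : ℝ :=
  ∏ j ∈ range n, (z + j) ^ 2 / ((z + j) ^ 2 - a ^ 2)

lemma gammaRatioProd_succ (a z : ℝ) (n : ℕ) :
    gammaRatioProd a z (n + 1) = gammaRatioProd a (z + 1) n * (z ^ 2 / (z ^ 2 - a ^ 2)) := by
  simp only [gammaRatioProd, prod_range_succ', Nat.cast_add, Nat.cast_one, Nat.cast_zero,
    add_zero, add_right_comm z, add_assoc]

lemma gammaRatioProd_nonneg {a z : ℝ} (h : |a| < z) (n : ℕ) : 0 ≤ gammaRatioProd a z n :=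
  prod_nonneg fun j _ => zero_le_one.trans <| one_le_sq_div_sq_sub_sq <| by
    linarith [(Nat.cast_nonneg j : (0 : ℝ) ≤ j)]

lemma gammaRatioProd_monotone {a z : ℝ} (h : |a| < z) : Monotone (gammaRatioProd a z) := by
  refine monotone_nat_of_le_succ fun n => ?_
  rw [gammaRatioProd, gammaRatioProd, prod_range_succ]
  exact le_mul_of_one_le_right (gammaRatioProd_nonneg h n)
    (one_le_sq_div_sq_sub_sq (by linarith [(Nat.cast_nonneg n : (0 : ℝ) ≤ n)]))

lemma gammaRatioProd_antitone_left {a s t : ℝ} (h : |a| < t) (hts : t ≤ s) (n : ℕ) :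
    gammaRatioProd a s n ≤ gammaRatioProd a t n := by
  have hj (j : ℕ) : |a| < t + j := by linarith [(Nat.cast_nonneg j : (0 : ℝ) ≤ j)]
  exact prod_le_prod (fun j _ => zero_le_one.trans (one_le_sq_div_sq_sub_sq
    ((hj j).trans_le (by linarith)))) fun j _ => sq_div_sq_sub_sq_antitone (hj j) (by linarith)

lemma GammaSeq_ratio_eq_gammaRatioProd {a z : ℝ} (h : |a| < z) {n : ℕ} (hn : n ≠ 0) :
    GammaSeq (z + a) n * GammaSeq (z - a) n / GammaSeq z n ^ 2 = gammaRatioProd a z (n + 1) := by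
  obtain ⟨hza, haz⟩ := abs_lt.1 h
  have hn0 : (0 : ℝ) < n := Nat.cast_pos.2 (Nat.pos_of_ne_zero hn)
  have hpos {c : ℝ} (hc : 0 < c) : 0 < ∏ j ∈ range (n + 1), (c + j) :=
    prod_pos fun j _ => by positivity
  have hA := hpos (show 0 < z + a by linarith)
  have hB := hpos (show 0 < z - a by linarith)
  have hC := hpos (show 0 < z by linarith)
  have hfact : (0 : ℝ) < n.factorial := Nat.cast_pos.2 n.factorial_pos
  have hpow : (n : ℝ) ^ (z + a) * (n : ℝ) ^ (z - a) = ((n : ℝ) ^ z) ^ 2 := by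
    rw [← rpow_add hn0, show z + a + (z - a) = z + z by ring, rpow_add hn0, sq]
  have hprod : gammaRatioProd a z (n + 1) = (∏ j ∈ range (n + 1), (z + j)) ^ 2 /
      ((∏ j ∈ range (n + 1), (z + a + j)) * ∏ j ∈ range (n + 1), (z - a + j)) := by
    rw [gammaRatioProd, ← prod_pow, ← prod_mul_distrib, ← prod_div_distrib]
    exact prod_congr rfl fun j _ => by ring_nf
  simp only [GammaSeq]
  rw [hprod, div_mul_div_comm, mul_mul_mul_comm, hpow, div_pow, mul_pow]
  field_simp

lemma tendsto_gammaRatioProd {a z : ℝ} (h : |a| < z) :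
    Tendsto (gammaRatioProd a z) atTop (𝓝 (Gamma (z + a) * Gamma (z - a) / Gamma z ^ 2)) := by
  have hΓ : Gamma z ^ 2 ≠ 0 := pow_ne_zero 2 (Gamma_pos_of_pos ((abs_nonneg a).trans_lt h)).ne'
  rw [← tendsto_add_atTop_iff_nat 1]
  refine (((GammaSeq_tendsto_Gamma _).mul (GammaSeq_tendsto_Gamma _)).div
    ((GammaSeq_tendsto_Gamma _).pow 2) hΓ).congr' ?_
  filter_upwards [eventually_ne_atTop 0] with n hn
  exact GammaSeq_ratio_eq_gammaRatioProd h hn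

theorem stmt_13 (a z : ℝ) (ha0 : 0 < a) (ha1 : a < 1) (hz : z > a) :
    z ^ 2 / (z ^ 2 - a ^ 2) ≤ Real.Gamma (z + a) * Real.Gamma (z - a) / Real.Gamma z ^ 2 ∧
      Real.Gamma (z + a) * Real.Gamma (z - a) / Real.Gamma z ^ 2 ≤
        Real.pi * a * z ^ 2 / (Real.sin (Real.pi * a) * (z ^ 2 - a ^ 2)) := by
  have hza : |a| < z := by rwa [abs_of_pos ha0]
  have ha : |a| < 1 := by rwa [abs_of_pos ha0]
  have hlim := tendsto_gammaRatioProd hza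
  have hlim_one := tendsto_gammaRatioProd ha
  rw [Gamma_one, one_pow, div_one, Gamma_one_add_mul_Gamma_one_sub ha0.ne'] at hlim_one
  constructor
  · simpa [gammaRatioProd] using (gammaRatioProd_monotone hza).ge_of_tendsto hlim 1
  · rw [← div_mul_div_comm]
    refine le_of_tendsto' (hlim.comp (tendsto_add_atTop_nat 1)) fun n => ?_
    calc gammaRatioProd a z (n + 1)
        = gammaRatioProd a (z + 1) n * (z ^ 2 / (z ^ 2 - a ^ 2)) := gammaRatioProd_succ a z n
      _ ≤ gammaRatioProd a 1 n * (z ^ 2 / (z ^ 2 - a ^ 2)) := by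
        gcongr
        · exact zero_le_one.trans (one_le_sq_div_sq_sub_sq hza)
        · exact gammaRatioProd_antitone_left ha (by linarith) n
      _ ≤ π * a / sin (π * a) * (z ^ 2 / (z ^ 2 - a ^ 2)) := by
        gcongr
        · exact zero_le_one.trans (one_le_sq_div_sq_sub_sq hza)
        · exact (gammaRatioProd_monotone ha).ge_of_tendsto hlim_one n
end

section
/- For all z > 1/2, 4z²/(4z² - 1) ≤ Γ(z + 1/2)·Γ(z - 1/2)/Γ(z)² ≤ 2πz²/(4z² - 1). -/
/-!
Midpoint log-convexity of `Γ` between `s` and `s + 1`, together with `Γ (s + 1) = s Γ s`, gives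
`Γ (s + 1/2)² ≤ s Γ(s)²`. Since `Γ (z - 1/2) = Γ (z + 1/2) / (z - 1/2)`, the lower bound is this
inequality at `s = z + 1/2` and the upper bound is it at `s = z + 1`, weakened by `π ≥ 3`.
-/

namespace Real

theorem Gamma_midpoint_sq_le_mul {s t : ℝ} (hs : 0 < s) (ht : 0 < t) :
    Gamma ((s + t) / 2) ^ 2 ≤ Gamma s * Gamma t := by
  have h := Gamma_mul_add_mul_le_rpow_Gamma_mul_rpow_Gamma hs ht (a := 1 / 2) (b := 1 / 2)
    (by norm_num) (by norm_num) (by norm_num)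
  rw [← sqrt_eq_rpow, ← sqrt_eq_rpow, show 1 / 2 * s + 1 / 2 * t = (s + t) / 2 by ring] at h
  calc Gamma ((s + t) / 2) ^ 2 ≤ (√(Gamma s) * √(Gamma t)) ^ 2 :=
        pow_le_pow_left₀ (Gamma_pos_of_pos (by positivity)).le h 2
    _ = Gamma s * Gamma t := by
        rw [mul_pow, sq_sqrt (Gamma_pos_of_pos hs).le, sq_sqrt (Gamma_pos_of_pos ht).le]

theorem Gamma_add_half_sq_le {s : ℝ} (hs : 0 < s) : Gamma (s + 1 / 2) ^ 2 ≤ s * Gamma s ^ 2 := by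
  have h := Gamma_midpoint_sq_le_mul hs (by linarith : 0 < s + 1)
  rw [show (s + (s + 1)) / 2 = s + 1 / 2 by ring, Gamma_add_one hs.ne'] at h
  linarith

end Real

open Real in
theorem stmt_14 (z : ℝ) (hz : z > 1 / 2) :
    4 * z ^ 2 / (4 * z ^ 2 - 1) ≤
        Real.Gamma (z + 1 / 2) * Real.Gamma (z - 1 / 2) / Real.Gamma z ^ 2 ∧
      Real.Gamma (z + 1 / 2) * Real.Gamma (z - 1 / 2) / Real.Gamma z ^ 2 ≤
        2 * Real.pi * z ^ 2 / (4 * z ^ 2 - 1) := by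
  have hz0 : 0 < z := by linarith
  have hden : 0 < 4 * z ^ 2 - 1 := by nlinarith
  have hG : 0 < Gamma z ^ 2 := pow_pos (Gamma_pos_of_pos hz0) 2
  have hratio : Gamma (z + 1 / 2) * Gamma (z - 1 / 2) * (4 * z ^ 2 - 1) =
      4 * (z + 1 / 2) * Gamma (z + 1 / 2) ^ 2 := by
    have := Gamma_add_one (s := z - 1 / 2) (by linarith)
    rw [show z - 1 / 2 + 1 = z + 1 / 2 by ring] at this
    rw [this]; ring
  have hlower := Gamma_add_half_sq_le (by linarith : 0 < z + 1 / 2)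
  have hupper := Gamma_add_half_sq_le (by linarith : 0 < z + 1)
  rw [show z + 1 / 2 + 1 / 2 = z + 1 by ring, Gamma_add_one hz0.ne'] at hlower
  rw [show z + 1 + 1 / 2 = z + 1 / 2 + 1 by ring, Gamma_add_one (by linarith),
    Gamma_add_one hz0.ne'] at hupper
  constructor
  · rw [div_le_div_iff₀ hden hG, hratio]
    linarith [mul_pow z (Gamma z) 2]
  · rw [div_le_div_iff₀ hG hden, hratio]
    have hpi : 4 * (z + 1) ≤ 2 * π * (z + 1 / 2) := by nlinarith [pi_gt_three]
    refine le_of_mul_le_mul_right ?_ (by linarith : 0 < z + 1 / 2)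
    calc 4 * (z + 1 / 2) * Gamma (z + 1 / 2) ^ 2 * (z + 1 / 2)
        = 4 * ((z + 1 / 2) * Gamma (z + 1 / 2)) ^ 2 := by ring
      _ ≤ 4 * (z + 1) * (z * Gamma z) ^ 2 := by linarith
      _ ≤ 2 * π * (z + 1 / 2) * (z * Gamma z) ^ 2 := by gcongr
      _ = 2 * π * z ^ 2 * Gamma z ^ 2 * (z + 1 / 2) := by ring
end

section
/- For all z ≥ 0, √(2/(2z+1)) ≤ Γ(z + 1/2)/Γ(z+1) ≤ √(π/(2z+1)). -/
/-!
The lower bound is log-convexity of `Γ` at the equally spaced points `z + 1/2, z + 1, z + 3/2`,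
i.e. `Γ(z+1)² ≤ Γ(z+1/2) Γ(z+3/2)`.

For the upper bound, Hölder's inequality on the beta integral makes `u ↦ B(u, 1/2)` log-convex.
Since `1` and `z + 1/2` lie between `1/2` and `z + 1` and have the same sum,
`B(z+1/2, 1/2) B(1, 1/2) ≤ B(1/2, 1/2) B(z+1, 1/2)`; with `B(1, 1/2) = 2`, `B(1/2, 1/2) = π`
and `B(u, 1/2) = √π Γ(u) / Γ(u + 1/2)` this is `2 Γ(z+1/2) Γ(z+3/2) ≤ π Γ(z+1)²`.

Both bounds then follow from `Γ(z+3/2) = (z+1/2) Γ(z+1/2)`.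
-/

open MeasureTheory Set Real

lemma rpow_mul_one_sub_rpow_nonneg {x : ℝ} (hx : x ∈ Ioo (0 : ℝ) 1) (a b : ℝ) :
    0 ≤ x ^ a * (1 - x) ^ b :=
  mul_nonneg (rpow_nonneg hx.1.le a) (rpow_nonneg (sub_nonneg.2 hx.2.le) b)

namespace ProbabilityTheory

lemma ofReal_beta_integrand {u v t : ℝ} (ht0 : 0 < t) (ht1 : t < 1) :
    ((t ^ (u - 1) * (1 - t) ^ (v - 1) : ℝ) : ℂ) =
      (t : ℂ) ^ ((u : ℂ) - 1) * (1 - t) ^ ((v : ℂ) - 1) := by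
  rw [Complex.ofReal_mul, Complex.ofReal_cpow ht0.le, Complex.ofReal_cpow (by linarith)]
  push_cast
  rfl

lemma integrableOn_beta_integrand {u v : ℝ} (hu : 0 < u) (hv : 0 < v) :
    IntegrableOn (fun t : ℝ => t ^ (u - 1) * (1 - t) ^ (v - 1)) (Ioo 0 1) := by
  have h := (Complex.betaIntegral_convergent (u := u) (v := v) (by simpa) (by simpa)).norm
  rw [intervalIntegrable_iff_integrableOn_Ioo_of_le zero_le_one] at h
  refine h.congr_fun (fun t ⟨ht0, ht1⟩ => ?_) measurableSet_Ioo
  dsimp only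
  rw [← ofReal_beta_integrand ht0 ht1, Complex.norm_real, norm_of_nonneg (by positivity)]

lemma beta_eq_integral {u v : ℝ} (hu : 0 < u) (hv : 0 < v) :
    beta u v = ∫ t in Ioo 0 1, t ^ (u - 1) * (1 - t) ^ (v - 1) := by
  have h := Complex.betaIntegral_convergent (u := u) (v := v) (by simpa) (by simpa)
  rw [intervalIntegrable_iff_integrableOn_Ioo_of_le zero_le_one] at h
  rw [beta_eq_betaIntegralReal u v hu hv, Complex.betaIntegral,
    intervalIntegral.integral_of_le zero_le_one, integral_Ioc_eq_integral_Ioo,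
    ← RCLike.re_to_complex, ← integral_re h]
  refine setIntegral_congr_fun measurableSet_Ioo fun t ⟨ht0, ht1⟩ => ?_
  rw [← ofReal_beta_integrand ht0 ht1, RCLike.re_to_complex, Complex.ofReal_re]

lemma beta_integrand_eq_rpow {c u v x : ℝ} (hc : 0 < c) (hx : x ∈ Ioo (0 : ℝ) 1) :
    x ^ (u - 1) * (1 - x) ^ (v - 1) = (x ^ (c * (u - 1)) * (1 - x) ^ (c * (v - 1))) ^ (1 / c) := by
  rw [mul_rpow (rpow_nonneg hx.1.le _) (rpow_nonneg (sub_nonneg.2 hx.2.le) _),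
    ← rpow_mul hx.1.le, ← rpow_mul (sub_nonneg.2 hx.2.le)]
  congr 2 <;> field

lemma memLp_beta_integrand {c u v : ℝ} (hc : 0 < c) (hu : 0 < u) (hv : 0 < v) :
    MemLp (fun x : ℝ => x ^ (c * (u - 1)) * (1 - x) ^ (c * (v - 1))) (ENNReal.ofReal (1 / c))
      (volume.restrict (Ioo 0 1)) := by
  have A : ENNReal.ofReal (1 / c) ≠ 0 := by
    rwa [Ne, ENNReal.ofReal_eq_zero, not_le, one_div_pos]
  have B : ENNReal.ofReal (1 / c) ≠ ⊤ := ENNReal.ofReal_ne_top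
  rw [← memLp_norm_rpow_iff _ A B, ENNReal.toReal_ofReal (one_div_nonneg.mpr hc.le),
    ENNReal.div_self A B, memLp_one_iff_integrable]
  · refine (integrableOn_beta_integrand hu hv).congr_fun (fun x hx => ?_) measurableSet_Ioo
    dsimp only
    rw [beta_integrand_eq_rpow hc hx, norm_of_nonneg (rpow_mul_one_sub_rpow_nonneg hx _ _)]
  · refine ContinuousOn.aestronglyMeasurable (fun x hx => ?_) measurableSet_Ioo
    have h0 : x ≠ 0 := hx.1.ne'
    have h1 : 1 - x ≠ 0 := (sub_pos.2 hx.2).ne'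
    exact ContinuousAt.continuousWithinAt (by fun_prop (disch := exact Or.inl ‹_›))

theorem beta_mul_add_mul_le_rpow_beta_mul_rpow_beta {s t v a b : ℝ} (hs : 0 < s) (ht : 0 < t)
    (hv : 0 < v) (ha : 0 < a) (hb : 0 < b) (hab : a + b = 1) :
    beta (a * s + b * t) v ≤ beta s v ^ a * beta t v ^ b := by
  -- Hölder with the conjugate exponents `1 / a`, `1 / b`, applied to `f a s` and `f b t`
  let f : ℝ → ℝ → ℝ → ℝ := fun c u x => x ^ (c * (u - 1)) * (1 - x) ^ (c * (v - 1))
  have f_nonneg : ∀ c u, ∀ᵐ x ∂volume.restrict (Ioo (0 : ℝ) 1), 0 ≤ f c u x :=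
    fun c u => (ae_restrict_iff' measurableSet_Ioo).mpr <| ae_of_all _ fun _ hx =>
      rpow_mul_one_sub_rpow_nonneg hx _ _
  rw [beta_eq_integral hs hv, beta_eq_integral ht hv, beta_eq_integral (by positivity) hv]
  convert integral_mul_le_Lp_mul_Lq_of_nonneg (holderConjugate_one_div ha hb hab)
    (f_nonneg a s) (f_nonneg b t) (memLp_beta_integrand ha hs hv)
    (memLp_beta_integrand hb ht hv) using 1
  · refine setIntegral_congr_fun measurableSet_Ioo fun x hx => ?_
    have hx1 : 0 < 1 - x := sub_pos.2 hx.2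
    rw [mul_mul_mul_comm, ← rpow_add hx.1, ← rpow_add hx1]
    congr 2
    · linear_combination hab
    · linear_combination (1 - v) * hab
  · rw [one_div_one_div, one_div_one_div]
    congr 2 <;> exact setIntegral_congr_fun measurableSet_Ioo fun x hx =>
      beta_integrand_eq_rpow (by assumption) hx

theorem convexOn_log_beta {v : ℝ} (hv : 0 < v) :
    ConvexOn ℝ (Ioi 0) fun u => log (beta u v) := by
  refine convexOn_iff_forall_pos.mpr
    ⟨convex_Ioi _, fun s (hs : 0 < s) t (ht : 0 < t) a b ha hb hab => ?_⟩
  have hs' : 0 < beta s v := beta_pos hs hv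
  have ht' : 0 < beta t v := beta_pos ht hv
  simp only [smul_eq_mul]
  rw [← log_rpow hs', ← log_rpow ht', ← log_mul (by positivity) (by positivity)]
  exact log_le_log (beta_pos (by positivity) hv)
    (beta_mul_add_mul_le_rpow_beta_mul_rpow_beta hs ht hv ha hb hab)

end ProbabilityTheory

theorem ConvexOn.add_le_add_of_add_eq {𝕜 β : Type*} [Field 𝕜] [LinearOrder 𝕜]
    [IsStrictOrderedRing 𝕜] [AddCommGroup β] [PartialOrder β] [IsOrderedAddMonoid β]
    [Module 𝕜 β] {s : Set 𝕜} {f : 𝕜 → β} (hf : ConvexOn 𝕜 s f) {p q x y : 𝕜}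
    (hp : p ∈ s) (hq : q ∈ s) (hpx : p ≤ x) (hxq : x ≤ q) (hxy : x + y = p + q) :
    f x + f y ≤ f p + f q := by
  obtain rfl | hpq := (hpx.trans hxq).eq_or_lt
  · obtain rfl : x = p := le_antisymm hxq hpx
    obtain rfl : y = x := by linear_combination hxy
    rfl
  -- `x` and `y` are the two convex combinations of `p, q` with weights `a, b` and `b, a`
  set a := (q - x) / (q - p)
  set b := (x - p) / (q - p)
  have hqp : q - p ≠ 0 := (sub_pos.2 hpq).ne'
  have ha : 0 ≤ a := div_nonneg (sub_nonneg.2 hxq) (sub_pos.2 hpq).le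
  have hb : 0 ≤ b := div_nonneg (sub_nonneg.2 hpx) (sub_pos.2 hpq).le
  have hab : a + b = 1 := by field
  have hx : a • p + b • q = x := by simp only [a, b, smul_eq_mul]; field
  have hy : b • p + a • q = y := by
    simp only [a, b, smul_eq_mul]
    rw [eq_sub_of_add_eq' hxy]
    field
  calc f x + f y ≤ (a • f p + b • f q) + (b • f p + a • f q) := by
        rw [← hx, ← hy]
        exact add_le_add (hf.2 hp hq ha hb hab) (hf.2 hp hq hb ha (by rwa [add_comm]))
    _ = (a + b) • f p + (a + b) • f q := by module
    _ = f p + f q := by rw [hab, one_smul, one_smul]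

theorem mul_le_mul_of_convexOn_log {f : ℝ → ℝ} (hf : ConvexOn ℝ (Ioi 0) (log ∘ f))
    (hf0 : ∀ x, 0 < x → 0 < f x) {p q x y : ℝ} (hp : 0 < p) (hpx : p ≤ x) (hxq : x ≤ q)
    (hxy : x + y = p + q) : f x * f y ≤ f p * f q := by
  have key := hf.add_le_add_of_add_eq hp (hp.trans_le (hpx.trans hxq)) hpx hxq hxy
  simp only [Function.comp_apply] at key
  have hx := hf0 x (by linarith)
  have hy := hf0 y (by linarith)
  have hq := hf0 q (by linarith)
  rwa [← log_mul hx.ne' hy.ne', ← log_mul (hf0 p hp).ne' hq.ne',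
    log_le_log_iff (by positivity) (mul_pos (hf0 p hp) hq)] at key

namespace Real

open ProbabilityTheory

theorem Gamma_add_half_mul_Gamma_add_three_halves_le {x : ℝ} (hx : 0 ≤ x) :
    2 * (Gamma (x + 1 / 2) * Gamma (x + 3 / 2)) ≤ π * Gamma (x + 1) ^ 2 := by
  have key := mul_le_mul_of_convexOn_log (f := fun u => beta u (1 / 2))
    (convexOn_log_beta one_half_pos) (fun u hu => beta_pos hu one_half_pos) one_half_pos
    (by linarith : (1 / 2 : ℝ) ≤ x + 1 / 2) (by linarith : x + 1 / 2 ≤ x + 1)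
    (by ring : x + 1 / 2 + 1 = 1 / 2 + (x + 1))
  have hΓ : Gamma (1 + 1 / 2) = Gamma (1 / 2) / 2 := by
    rw [add_comm, Gamma_add_one one_half_pos.ne']; ring
  simp only [beta, hΓ, add_halves, Gamma_one, show x + 1 + 1 / 2 = x + 3 / 2 by ring,
    show x + 1 / 2 + 1 / 2 = x + 1 by ring] at key
  have hB := Gamma_pos_of_pos (by linarith : 0 < x + 1)
  have hC := Gamma_pos_of_pos (by linarith : 0 < x + 3 / 2)
  rw [Gamma_one_half_eq] at key
  generalize Gamma (x + 1 / 2) = A, Gamma (x + 1) = B, Gamma (x + 3 / 2) = C at *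
  have hπ := sqrt_pos.2 pi_pos
  field_simp at key
  rw [sq_sqrt pi_pos.le] at key
  linarith

theorem Gamma_add_one_sq_le {x : ℝ} (hx : -(1 / 2) < x) :
    Gamma (x + 1) ^ 2 ≤ Gamma (x + 1 / 2) * Gamma (x + 3 / 2) := by
  rw [sq]
  exact mul_le_mul_of_convexOn_log convexOn_log_Gamma (fun _ => Gamma_pos_of_pos)
    (by linarith) (by linarith) (by linarith) (by ring)

end Real

theorem stmt_15 (z : ℝ) (hz : 0 ≤ z) :
    Real.sqrt (2 / (2 * z + 1)) ≤ Real.Gamma (z + 1 / 2) / Real.Gamma (z + 1) ∧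
      Real.Gamma (z + 1 / 2) / Real.Gamma (z + 1) ≤ Real.sqrt (Real.pi / (2 * z + 1)) := by
  have hrec : Gamma (z + 3 / 2) = (z + 1 / 2) * Gamma (z + 1 / 2) := by
    rw [← Gamma_add_one (by linarith), add_assoc]; norm_num
  have lower := Gamma_add_one_sq_le (by linarith : -(1 / 2) < z)
  have upper := Gamma_add_half_mul_Gamma_add_three_halves_le hz
  rw [hrec] at lower upper
  constructor
  · rw [sqrt_le_left (by positivity), div_pow, div_le_div_iff₀ (by positivity) (by positivity)]
    linarith
  · rw [le_sqrt (by positivity) (by positivity), div_pow,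
      div_le_div_iff₀ (by positivity) (by positivity)]
    linarith
end

section
/- For 0 < a < x < y, Γ(x+1)·Γ(y-a+1) ≤ Γ(y+1)·Γ(x-a+1). -/
/-!
`Γ` is log-convex on `(0, ∞)`, and a convex function `g` has increments `g z - g (z - a)` over a
window of fixed length `a ≥ 0` that grow with `z`: both secants, over `[x - a, x]` and over
`[y - a, y]`, compare with the secant over `[x - a, y]`.
-/

theorem ConvexOn.map_sub_map_sub_le {𝕜 : Type*} [Field 𝕜] [LinearOrder 𝕜]
    [IsStrictOrderedRing 𝕜] {s : Set 𝕜} {f : 𝕜 → 𝕜} (hf : ConvexOn 𝕜 s f) {a x y : 𝕜}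
    (ha : 0 ≤ a) (hxa : x - a ∈ s) (hy : y ∈ s) (hxy : x ≤ y) :
    f x - f (x - a) ≤ f y - f (y - a) := by
  rcases ha.eq_or_lt with rfl | ha
  · simp
  rcases hxy.eq_or_lt with rfl | hxy
  · rfl
  have hx : x ∈ s := hf.1.ordConnected.out hxa hy ⟨by linarith, hxy.le⟩
  have hya : y - a ∈ s := hf.1.ordConnected.out hxa hy ⟨by linarith, by linarith⟩
  have hslope : slope f (x - a) x ≤ slope f (y - a) y :=
    calc slope f (x - a) x
      _ ≤ slope f (x - a) y :=
        hf.slope_mono hxa ⟨hx, by simp; linarith⟩ ⟨hy, by simp; linarith⟩ hxy.le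
      _ = slope f y (x - a) := slope_comm ..
      _ ≤ slope f y (y - a) :=
        hf.slope_mono hy ⟨hxa, by simp; linarith⟩ ⟨hya, by simp; linarith⟩ (by linarith)
      _ = slope f (y - a) y := slope_comm ..
  simp only [slope_def_field, sub_sub_cancel] at hslope
  exact (div_le_div_iff_of_pos_right ha).1 hslope

theorem Real.Gamma_mul_Gamma_sub_le {a x y : ℝ} (ha : 0 ≤ a) (hxa : 0 < x - a) (hxy : x ≤ y) :
    Real.Gamma x * Real.Gamma (y - a) ≤ Real.Gamma y * Real.Gamma (x - a) := by
  have hx : 0 < x := by linarith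
  have hya : 0 < y - a := by linarith
  have hlog :=
    Real.convexOn_log_Gamma.map_sub_map_sub_le ha hxa (by simpa using hx.trans_le hxy) hxy
  simp only [Function.comp_apply] at hlog
  have hGx := Real.Gamma_pos_of_pos hx
  have hGy := Real.Gamma_pos_of_pos (hx.trans_le hxy)
  have hGxa := Real.Gamma_pos_of_pos hxa
  have hGya := Real.Gamma_pos_of_pos hya
  rw [← Real.log_le_log_iff (by positivity) (by positivity), Real.log_mul hGx.ne' hGya.ne',
    Real.log_mul hGy.ne' hGxa.ne']
  linarith

theorem stmt_17 (a x y : ℝ) (ha : 0 < a) (hax : a < x) (hxy : x < y) :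
    Real.Gamma (x + 1) * Real.Gamma (y - a + 1) ≤
      Real.Gamma (y + 1) * Real.Gamma (x - a + 1) := by
  simpa only [add_sub_right_comm] using
    Real.Gamma_mul_Gamma_sub_le (x := x + 1) (y := y + 1) ha.le (by linarith) (by linarith)
end

section
/- For 0 < a ≤ 1, (2a - a²)/a² ≤ Γ(a)²/Γ(2a) ≤ 2/a. -/
/-!
The upper bound is log-convexity of `Γ` at the midpoint of `1` and `2a + 1`:
`Γ(a + 1)² ≤ Γ(1) Γ(2a + 1)`, which after `Γ(s + 1) = s Γ(s)` reads
`Γ(2a) / Γ(a)² ≥ a / 2`.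
For the lower bound, `Γ(a)² / Γ(2a)` is the Beta integral `∫₀¹ uv` with `u = x^(a-1)`,
`v = (1-x)^(a-1)`; for `a ≤ 1` both `u, v ≥ 1` on `(0, 1)`, so `uv ≥ u + v - 1`,
whose integral is `2/a - 1`.
-/

open Real Set MeasureTheory intervalIntegral

namespace Real

lemma sq_Gamma_add_one_le_Gamma_two_mul_add_one {a : ℝ} (ha : 0 < 2 * a + 1) :
    Gamma (a + 1) ^ 2 ≤ Gamma (2 * a + 1) := by
  have hlogconvex := Gamma_mul_add_mul_le_rpow_Gamma_mul_rpow_Gamma one_pos ha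
    one_half_pos one_half_pos (add_halves 1)
  rw [Gamma_one, one_rpow, one_mul, show 1 / 2 * 1 + 1 / 2 * (2 * a + 1) = a + 1 by ring]
    at hlogconvex
  calc Gamma (a + 1) ^ 2 ≤ (Gamma (2 * a + 1) ^ (1 / 2 : ℝ)) ^ 2 :=
        pow_le_pow_left₀ (Gamma_nonneg_of_nonneg (by linarith)) hlogconvex 2
    _ = Gamma (2 * a + 1) := by
        rw [← rpow_natCast, ← rpow_mul (Gamma_nonneg_of_nonneg ha.le)]
        norm_num

lemma sq_Gamma_div_Gamma_two_mul_le {a : ℝ} (ha : 0 < a) :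
    Gamma a ^ 2 / Gamma (2 * a) ≤ 2 / a := by
  have h2a : 0 < 2 * a := by positivity
  have hΓ : 0 < Gamma (2 * a) := Gamma_pos_of_pos h2a
  have hsq := sq_Gamma_add_one_le_Gamma_two_mul_add_one (a := a) (by linarith)
  rw [Gamma_add_one ha.ne', Gamma_add_one h2a.ne'] at hsq
  rw [div_le_div_iff₀ hΓ ha]
  nlinarith

lemma betaIntegrand_ofReal_eqOn (s t : ℝ) :
    EqOn (fun x : ℝ => ((x ^ (s - 1) * (1 - x) ^ (t - 1) : ℝ) : ℂ))
      (fun x : ℝ => (x : ℂ) ^ ((s : ℂ) - 1) * (1 - (x : ℂ)) ^ ((t : ℂ) - 1))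
      (uIcc 0 1) := by
  intro x hx
  rw [uIcc_of_le zero_le_one] at hx
  have hx' : 0 ≤ 1 - x := sub_nonneg.2 hx.2
  simp only [Complex.ofReal_mul, Complex.ofReal_cpow hx.1, Complex.ofReal_cpow hx']
  push_cast
  rfl

lemma intervalIntegrable_betaIntegrand {s t : ℝ} (hs : 0 < s) (ht : 0 < t) :
    IntervalIntegrable (fun x : ℝ => x ^ (s - 1) * (1 - x) ^ (t - 1)) volume 0 1 := by
  have hC := (Complex.betaIntegral_convergent (u := s) (v := t) (by simpa) (by simpa)).congr
    ((betaIntegrand_ofReal_eqOn s t).symm.mono uIoc_subset_uIcc)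
  simpa [intervalIntegrable_iff, IntegrableOn] using (intervalIntegrable_iff.1 hC).re

lemma Gamma_mul_Gamma_eq_mul_integral {s t : ℝ} (hs : 0 < s) (ht : 0 < t) :
    Gamma s * Gamma t = Gamma (s + t) * ∫ x in (0 : ℝ)..1, x ^ (s - 1) * (1 - x) ^ (t - 1) := by
  have hC := Complex.Gamma_mul_Gamma_eq_betaIntegral (s := s) (t := t) (by simpa) (by simpa)
  rw [Complex.betaIntegral, ← integral_congr (betaIntegrand_ofReal_eqOn s t), integral_ofReal,
    ← Complex.ofReal_add, Complex.Gamma_ofReal, Complex.Gamma_ofReal, Complex.Gamma_ofReal] at hC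
  exact_mod_cast hC

lemma integral_rpow_sub_one_zero_one {s : ℝ} (hs : 0 < s) :
    ∫ x in (0 : ℝ)..1, x ^ (s - 1) = s⁻¹ := by
  rw [integral_rpow (Or.inl (by linarith)), sub_add_cancel, one_rpow, zero_rpow hs.ne',
    sub_zero, one_div]

lemma integral_one_sub_rpow_sub_one_zero_one {s : ℝ} (hs : 0 < s) :
    ∫ x in (0 : ℝ)..1, (1 - x) ^ (s - 1) = s⁻¹ := by
  rw [integral_comp_sub_left (fun x => x ^ (s - 1)), sub_zero, sub_self,
    integral_rpow_sub_one_zero_one hs]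

lemma inv_add_inv_sub_one_le_integral_betaIntegrand {s t : ℝ} (hs : 0 < s) (hs1 : s ≤ 1)
    (ht : 0 < t) (ht1 : t ≤ 1) :
    s⁻¹ + t⁻¹ - 1 ≤ ∫ x in (0 : ℝ)..1, x ^ (s - 1) * (1 - x) ^ (t - 1) := by
  have hleft : IntervalIntegrable (fun x : ℝ => x ^ (s - 1)) volume 0 1 :=
    intervalIntegrable_rpow' (by linarith)
  have hright : IntervalIntegrable (fun x : ℝ => (1 - x) ^ (t - 1)) volume 0 1 := by
    simpa using ((intervalIntegrable_rpow' (r := t - 1) (a := 0) (b := 1)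
      (by linarith)).comp_sub_left 1).symm
  calc s⁻¹ + t⁻¹ - 1
      = ∫ x in (0 : ℝ)..1, (x ^ (s - 1) + (1 - x) ^ (t - 1) - 1) := by
        rw [integral_sub (hleft.add hright) intervalIntegrable_const, integral_add hleft hright,
          integral_rpow_sub_one_zero_one hs, integral_one_sub_rpow_sub_one_zero_one ht,
          intervalIntegral.integral_const, sub_zero, one_smul]
    _ ≤ ∫ x in (0 : ℝ)..1, x ^ (s - 1) * (1 - x) ^ (t - 1) := by
        refine integral_mono_on_of_le_Ioo zero_le_one ((hleft.add hright).sub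
          intervalIntegrable_const) (intervalIntegrable_betaIntegrand hs ht) fun x hx => ?_
        have hu : 1 ≤ x ^ (s - 1) :=
          one_le_rpow_of_pos_of_le_one_of_nonpos hx.1 hx.2.le (by linarith)
        have hv : 1 ≤ (1 - x) ^ (t - 1) :=
          one_le_rpow_of_pos_of_le_one_of_nonpos (by linarith [hx.2]) (by linarith [hx.1])
            (by linarith)
        nlinarith [mul_nonneg (sub_nonneg.2 hu) (sub_nonneg.2 hv)]

end Real

theorem stmt_19 (a : ℝ) (ha0 : 0 < a) (ha1 : a ≤ 1) :
    (2 * a - a ^ 2) / a ^ 2 ≤ Real.Gamma a ^ 2 / Real.Gamma (2 * a) ∧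
      Real.Gamma a ^ 2 / Real.Gamma (2 * a) ≤ 2 / a := by
  have hbeta :
      Gamma a ^ 2 / Gamma (2 * a) = ∫ x in (0 : ℝ)..1, x ^ (a - 1) * (1 - x) ^ (a - 1) := by
    rw [sq, Gamma_mul_Gamma_eq_mul_integral ha0 ha0, ← two_mul,
      mul_div_cancel_left₀ _ (Gamma_pos_of_pos (by positivity)).ne']
  refine ⟨?_, sq_Gamma_div_Gamma_two_mul_le ha0⟩
  calc (2 * a - a ^ 2) / a ^ 2 = a⁻¹ + a⁻¹ - 1 := by field_simp; ring
    _ ≤ Gamma a ^ 2 / Gamma (2 * a) :=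
      hbeta ▸ inv_add_inv_sub_one_le_integral_betaIntegrand ha0 ha1 ha0 ha1
end
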